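/- Idempotence: for every extended program P, the extended WS-models and the extended RD-models of the dynamic logic program ⟨P, P⟩ coincide with those of ⟨P⟩, i.e. WS'(⟨P, P⟩) = WS'(⟨P⟩) and RD'(⟨P, P⟩) = RD'(⟨P⟩). -/
import Mathlib


namespace RuleUpdates

/-- Objective literal: an atom (a natural number) or its strong negation. -/
inductive OLit where
  | pos : ℕ → OLit
  | neg : ℕ → OLit
deriving DecidableEq

/-- Strong negation on objective literals (with ¬¬p identified with p). -/
def OLit.compl : OLit → OLit
  | .pos p => .neg p
  | .neg p => .pos p

/-- Literal: an objective literal or its default negation (not not l = l). -/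
inductive Lit where
  | obj : OLit → Lit
  | ndef : OLit → Lit
deriving DecidableEq

/-- Extended rule: a head literal and a finite set of body literals. -/
structure Rule where
  head : Lit
  body : Finset Lit

/-- Interpretation: a consistent set of objective literals. -/
def Interp (J : Set OLit) : Prop :=
  ∀ p : ℕ, ¬ (OLit.pos p ∈ J ∧ OLit.neg p ∈ J)

/-- Satisfaction of a literal. -/
def satLit (J : Set OLit) : Lit → Prop
  | .obj l => l ∈ J
  | .ndef l => l ∉ J

/-- Satisfaction of a set of body literals. -/
def satBody (J : Set OLit) (B : Finset Lit) : Prop :=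
  ∀ L ∈ B, satLit J L

/-- Satisfaction of a rule. -/
def satRule (J : Set OLit) (π : Rule) : Prop :=
  satBody J π.body → satLit J π.head

/-- J is a model of a program. -/
def isModel (J : Set OLit) (P : Set Rule) : Prop :=
  ∀ π ∈ P, satRule J π

/-- J* = J ∪ { not l | l ∈ ℒ ∖ J }, as a set of literals. -/
def star (J : Set OLit) : Set Lit :=
  {L | ∃ l : OLit, (L = Lit.obj l ∧ l ∈ J) ∨ (L = Lit.ndef l ∧ l ∉ J)}

/-- def(J) = { (not l.) | l ∈ ℒ ∖ J }. -/
def defFacts (J : Set OLit) : Set Rule :=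
  {π | ∃ l : OLit, l ∉ J ∧ π = ⟨Lit.ndef l, ∅⟩}

/-- S (a set of literals) is closed under program P, all literals
treated as distinct propositional atoms. -/
def closedUnder (P : Set Rule) (S : Set Lit) : Prop :=
  ∀ π ∈ P, (π.body : Set Lit) ⊆ S → π.head ∈ S

/-- least(P): the least model of P when all literals are treated as
distinct propositional atoms. -/
def leastModel (P : Set Rule) : Set Lit :=
  ⋂₀ {S | closedUnder P S}

/-- Stable model of an extended program: J* = least(P ∪ def(J)). -/
def isStableModel (P : Set Rule) (J : Set OLit) : Prop :=
  Interp J ∧ star J = leastModel (P ∪ defFacts J)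

/-- Level of a literal, with ℓ(not l) = ℓ(l). -/
def litLevel (ℓ : OLit → ℕ) : Lit → ℕ
  | .obj l => ℓ l
  | .ndef l => ℓ l

/-- ℓ↑(S): the maximal level of a literal in the finite set S. -/
def supLevel (ℓ : OLit → ℕ) (S : Finset Lit) : ℕ :=
  S.sup (litLevel ℓ)

/-- ℓ↓(S): the minimal level of a literal in the finite set S. -/
noncomputable def infLevel (ℓ : OLit → ℕ) (S : Finset Lit) : ℕ :=
  sInf (litLevel ℓ '' (S : Set Lit))

/-- Well-supported model of an extended program w.r.t. a level mapping ℓ. -/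
def isWSModelWith (P : Set Rule) (J : Set OLit) (ℓ : OLit → ℕ) : Prop :=
  isModel J P ∧
    ∀ l ∈ J, ∃ π ∈ P, π.head = Lit.obj l ∧ satBody J π.body ∧
      supLevel ℓ π.body < ℓ l

/-- Well-supported model of an extended program. -/
def isWSModel (P : Set Rule) (J : Set OLit) : Prop :=
  Interp J ∧ ∃ ℓ : OLit → ℕ, isWSModelWith P J ℓ

/-- con(L): the literals in conflict with L. -/
def con : Lit → Finset Lit
  | .obj l => {Lit.ndef l, Lit.obj l.compl}
  | .ndef l => {Lit.obj l}

/-- ρ(P): all rules occurring in the components of the DLP. -/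
def allRules {n : ℕ} (P : Fin n → Set Rule) : Set Rule :=
  {π | ∃ i : Fin n, π ∈ P i}

/-- The rule π ∈ P i is rejected w.r.t. the set of literals S:
some later σ with conflicting head has its body included in S. -/
def rejIn {n : ℕ} (P : Fin n → Set Rule) (S : Set Lit) (i : Fin n) (π : Rule) : Prop :=
  ∃ j : Fin n, i < j ∧ ∃ σ ∈ P j, σ.head ∈ con π.head ∧ (σ.body : Set Lit) ⊆ S

/-- rem(P, S) = ρ(P) ∖ rej(P, S), as a set of component-indexed rules. -/
def remSet {n : ℕ} (P : Fin n → Set Rule) (S : Set Lit) : Set (Fin n × Rule) :=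
  {x | x.2 ∈ P x.1 ∧ ¬ rejIn P S x.1 x.2}

/-- The operator T_{P,J}. -/
def TOp {n : ℕ} (P : Fin n → Set Rule) (J : Set OLit) (S : Set Lit) : Set Lit :=
  {L | ((∃ x ∈ remSet P (star J), x.2.head = L ∧ (x.2.body : Set Lit) ⊆ S) ∨
        (∃ l : OLit, l ∉ J ∧ L = Lit.ndef l)) ∧
       ¬ ∃ σ ∈ remSet P S, σ.2.head ∈ con L ∧ (σ.2.body : Set Lit) ⊆ star J}

/-- Iterates of T_{P,J} starting from ∅. -/
def TIter {n : ℕ} (P : Fin n → Set Rule) (J : Set OLit) : ℕ → Set Lit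
  | 0 => ∅
  | k + 1 => TOp P J (TIter P J k)

/-- Extended RD-model of a DLP: J* = ⋃_{k≥0} T_{P,J}^k(∅). -/
def isExtRD {n : ℕ} (P : Fin n → Set Rule) (J : Set OLit) : Prop :=
  Interp J ∧ star J = ⋃ k : ℕ, TIter P J k

/-- rej^ℓ(P, J): π ∈ P i is rejected w.r.t. J and the level mapping ℓ. -/
def rejLvl {n : ℕ} (P : Fin n → Set Rule) (J : Set OLit) (ℓ : OLit → ℕ)
    (i : Fin n) (π : Rule) : Prop :=
  ∃ j : Fin n, i < j ∧ ∃ σ ∈ P j, σ.head ∈ con π.head ∧ satBody J σ.body ∧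
    supLevel ℓ σ.body < infLevel ℓ (con π.head)

/-- Extended WS-model of a DLP. -/
def isExtWS {n : ℕ} (P : Fin n → Set Rule) (J : Set OLit) : Prop :=
  Interp J ∧ ∃ ℓ : OLit → ℕ,
    (∀ i : Fin n, ∀ π ∈ P i, ¬ rejLvl P J ℓ i π → satRule J π) ∧
    (∀ l ∈ J, ∃ x ∈ remSet P (star J), x.2.head = Lit.obj l ∧ satBody J x.2.body ∧
      supLevel ℓ x.2.body < ℓ l)

/-- A program is acyclic w.r.t. a level mapping ℓ. -/
def acyclicWrt (Q : Set Rule) (ℓ : OLit → ℕ) : Prop :=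
  (∀ l : OLit, ℓ l = ℓ l.compl) ∧ ∀ π ∈ Q, supLevel ℓ π.body < litLevel ℓ π.head

lemma no_rejIn_last2 (P : Set Rule) (S : Set Lit) (π : Rule) :
    ¬ rejIn ![P, P] S 1 π := by
  rintro ⟨j, hj, -⟩
  fin_cases j <;> exact absurd hj (by decide)

lemma no_rejIn_one1 (P : Set Rule) (S : Set Lit) (π : Rule) (i : Fin 1) :
    ¬ rejIn (fun _ : Fin 1 => P) S i π := by
  rintro ⟨j, hj, -⟩
  have := j.isLt
  have := i.isLt
  rw [Fin.lt_def] at hj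
  omega

lemma mem2 (P : Set Rule) (i : Fin 2) : ![P, P] i = P := by
  fin_cases i <;> rfl

lemma exists_rem2 (P : Set Rule) (S : Set Lit) (Φ : Rule → Prop) :
    (∃ x ∈ remSet ![P, P] S, Φ x.2) ↔ ∃ π ∈ P, Φ π := by
  constructor
  · rintro ⟨⟨i, π⟩, ⟨hmem, -⟩, hΦ⟩
    exact ⟨π, by rwa [mem2] at hmem, hΦ⟩
  · rintro ⟨π, hπ, hΦ⟩
    exact ⟨⟨1, π⟩, ⟨by rwa [mem2], no_rejIn_last2 P S π⟩, hΦ⟩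

lemma exists_rem1 (P : Set Rule) (S : Set Lit) (Φ : Rule → Prop) :
    (∃ x ∈ remSet (fun _ : Fin 1 => P) S, Φ x.2) ↔ ∃ π ∈ P, Φ π := by
  constructor
  · rintro ⟨⟨i, π⟩, ⟨hmem, -⟩, hΦ⟩
    exact ⟨π, hmem, hΦ⟩
  · rintro ⟨π, hπ, hΦ⟩
    exact ⟨⟨0, π⟩, ⟨hπ, no_rejIn_one1 P S π 0⟩, hΦ⟩

lemma TOp_eq (P : Set Rule) (J : Set OLit) (S : Set Lit) :
    TOp ![P, P] J S = TOp (fun _ : Fin 1 => P) J S := by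
  ext L
  unfold TOp
  simp only [Set.mem_setOf_eq]
  rw [exists_rem2 P (star J) (fun π => π.head = L ∧ (π.body : Set Lit) ⊆ S),
    exists_rem1 P (star J) (fun π => π.head = L ∧ (π.body : Set Lit) ⊆ S),
    exists_rem2 P S (fun σ => σ.head ∈ con L ∧ (σ.body : Set Lit) ⊆ star J),
    exists_rem1 P S (fun σ => σ.head ∈ con L ∧ (σ.body : Set Lit) ⊆ star J)]

lemma TIter_eq (P : Set Rule) (J : Set OLit) (k : ℕ) :
    TIter ![P, P] J k = TIter (fun _ : Fin 1 => P) J k := by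
  induction k with
  | zero => rfl
  | succ k ih => rw [TIter, TIter, ih, TOp_eq]

lemma no_rejLvl_last2 (P : Set Rule) (J : Set OLit) (ℓ : OLit → ℕ) (π : Rule) :
    ¬ rejLvl ![P, P] J ℓ 1 π := by
  rintro ⟨j, hj, -⟩
  fin_cases j <;> exact absurd hj (by decide)

lemma no_rejLvl_one1 (P : Set Rule) (J : Set OLit) (ℓ : OLit → ℕ) (i : Fin 1) (π : Rule) :
    ¬ rejLvl (fun _ : Fin 1 => P) J ℓ i π := by
  rintro ⟨j, hj, -⟩
  have := j.isLt
  have := i.isLt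
  rw [Fin.lt_def] at hj
  omega

/-- idempotence: WS'(⟨P, P⟩) = WS'(⟨P⟩) and RD'(⟨P, P⟩) = RD'(⟨P⟩). -/
theorem idempotence (P : Set Rule) :
    {J : Set OLit | isExtWS ![P, P] J} = {J : Set OLit | isExtWS (fun _ : Fin 1 => P) J} ∧
    {J : Set OLit | isExtRD ![P, P] J} = {J : Set OLit | isExtRD (fun _ : Fin 1 => P) J} := by
  constructor
  · ext J
    simp only [Set.mem_setOf_eq]
    constructor
    · rintro ⟨hI, ℓ, h1, h2⟩
      refine ⟨hI, ℓ, ?_, ?_⟩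
      · intro i π hπ _
        exact h1 1 π (by rwa [mem2]) (no_rejLvl_last2 P J ℓ π)
      · intro l hl
        exact (exists_rem1 P (star J) _).mpr ((exists_rem2 P (star J) (fun π => π.head = Lit.obj l ∧ satBody J π.body ∧ supLevel ℓ π.body < ℓ l)).mp (h2 l hl))
    · rintro ⟨hI, ℓ, h1, h2⟩
      refine ⟨hI, ℓ, ?_, ?_⟩
      · intro i π hπ _
        rw [mem2] at hπ
        exact h1 0 π hπ (no_rejLvl_one1 P J ℓ 0 π)
      · intro l hl
        exact (exists_rem2 P (star J) _).mpr ((exists_rem1 P (star J) (fun π => π.head = Lit.obj l ∧ satBody J π.body ∧ supLevel ℓ π.body < ℓ l)).mp (h2 l hl))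
  · ext J
    simp only [Set.mem_setOf_eq]
    unfold isExtRD
    have h : ∀ k, TIter ![P, P] J k = TIter (fun _ : Fin 1 => P) J k := TIter_eq P J
    rw [show (⋃ k : ℕ, TIter ![P, P] J k) = ⋃ k : ℕ, TIter (fun _ : Fin 1 => P) J k from
      Set.iUnion_congr h]

end RuleUpdates
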